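/- For integers n ≥ 2 and t ≥ 1, the domination number of the Sierpiński graph S(K_n,t) equals (n^t + n)/(n+1) when t is even and (n^t + 1)/(n+1) when t is odd. -/

import Mathlib

/-!
Every vertex of `S(K_n, t)` has degree at most `n`, so `(n + 1) γ ≥ n ^ t`. Conversely,
`S(K_n, t + 1)` is `n` copies `v S(K_n, t)` joined by the edges `u v^t ~ v u^t` between extreme
vertices, and dominating sets of the copies that contain all, one or none of their extreme
vertices, or that miss one, glue into sets of the same four kinds one level up. Their sizes
satisfy a linear recursion giving `(n + 1) |D| = n ^ t + n` for even `t` and `n ^ t + 1` for odd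
`t`; as this exceeds `n ^ t` by at most `n`, the counting bound forces `|D| = γ`.
-/

variable {V : Type*}

/-- A Roman dominating function: every vertex with value 0 has a neighbor with value 2. -/
def IsRDF (G : SimpleGraph V) (f : V → Fin 3) : Prop :=
  ∀ v, f v = 0 → ∃ u, G.Adj u v ∧ f u = 2

/-- The weight of a Roman dominating function. -/
def romanWeight [Fintype V] (f : V → Fin 3) : ℕ := ∑ v, (f v : ℕ)

/-- The Roman domination number. -/
noncomputable def gammaR [Fintype V] (G : SimpleGraph V) : ℕ :=
  sInf {k | ∃ f : V → Fin 3, IsRDF G f ∧ romanWeight f = k}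

/-- A dominating set. -/
def IsDomSet (G : SimpleGraph V) (D : Set V) : Prop :=
  ∀ v, v ∈ D ∨ ∃ u ∈ D, G.Adj u v

/-- The domination number. -/
noncomputable def gamma [Fintype V] (G : SimpleGraph V) : ℕ :=
  sInf {k | ∃ D : Set V, IsDomSet G D ∧ D.ncard = k}

/-- The generalized Sierpiński graph `S(G,t)` on words of length `t` over `V`. -/
def sierpinski (G : SimpleGraph V) (t : ℕ) : SimpleGraph (Fin t → V) where
  Adj x y := ∃ i : Fin t, (∀ j, j < i → x j = y j) ∧ G.Adj (x i) (y i) ∧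
    (∀ j, i < j → x j = y i ∧ y j = x i)
  symm := by
    refine ⟨?_⟩
    rintro x y ⟨i, h1, h2, h3⟩
    exact ⟨i, fun j hj => (h1 j hj).symm, h2.symm, fun j hj => ⟨(h3 j hj).2, (h3 j hj).1⟩⟩
  loopless := by
    refine ⟨?_⟩
    rintro x ⟨i, -, h2, -⟩
    exact G.loopless.irrefl _ h2

open Finset

section Domination

variable (G : SimpleGraph V)

def Dominated (D : Set V) (x : V) : Prop :=
  x ∈ D ∨ ∃ u ∈ D, G.Adj u x

variable [Fintype V]

theorem gamma_le {D : Set V} (hD : IsDomSet G D) : gamma G ≤ D.ncard :=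
  Nat.sInf_le ⟨D, hD, rfl⟩

theorem exists_isDomSet_ncard_eq_gamma : ∃ D : Set V, IsDomSet G D ∧ D.ncard = gamma G :=
  Nat.sInf_mem (s := {k | ∃ D : Set V, IsDomSet G D ∧ D.ncard = k})
    ⟨_, Set.univ, fun _ => Or.inl trivial, rfl⟩

theorem card_le_mul_gamma [G.LocallyFinite] {Δ : ℕ}
    (hΔ : ∀ v, G.degree v ≤ Δ) : Fintype.card V ≤ (Δ + 1) * gamma G := by
  classical
  obtain ⟨D, hD, hcard⟩ := exists_isDomSet_ncard_eq_gamma G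
  rw [← hcard, Set.ncard_eq_toFinset_card' D, mul_comm, ← card_univ]
  calc #(univ : Finset V)
      ≤ #(D.toFinset.biUnion fun u => insert u (G.neighborFinset u)) := by
        refine card_le_card fun v _ => ?_
        rcases hD v with hv | ⟨u, hu, huv⟩
        · exact mem_biUnion.2 ⟨v, Set.mem_toFinset.2 hv, mem_insert_self _ _⟩
        · exact mem_biUnion.2 ⟨u, Set.mem_toFinset.2 hu,
            mem_insert_of_mem ((G.mem_neighborFinset u v).2 huv)⟩
    _ ≤ #D.toFinset * (Δ + 1) := card_biUnion_le_card_mul _ _ _ fun u _ =>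
        (card_insert_le _ _).trans (Nat.succ_le_succ (hΔ u))

theorem mul_gamma_eq_of_isDomSet {D : Finset V} (hD : IsDomSet G D) {k N r : ℕ} (hr : r ≤ k)
    (hlow : N ≤ (k + 1) * gamma G) (hcard : (k + 1) * #D = N + r) :
    (k + 1) * gamma G = N + r := by
  have hle : gamma G ≤ #D := by simpa using gamma_le G hD
  have hge : #D ≤ gamma G := by
    by_contra! h
    nlinarith
  rw [le_antisymm hle hge, hcard]

end Domination

section Sierpinski

variable {G : SimpleGraph V} {t : ℕ}

theorem sierpinski_adj_cons_cons (u : V) {x y : Fin t → V} (h : (sierpinski G t).Adj x y) :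
    (sierpinski G (t + 1)).Adj (Fin.cons u x) (Fin.cons u y) := by
  obtain ⟨i, hlt, hi, hgt⟩ := h
  refine ⟨i.succ, Fin.cases (fun _ => rfl) fun j hj => ?_, by simpa using hi,
    Fin.cases (fun h => absurd h (Fin.not_lt_zero _)) fun j hj => ?_⟩
  · simpa using hlt j (Fin.succ_lt_succ_iff.1 hj)
  · simpa using hgt j (Fin.succ_lt_succ_iff.1 hj)

theorem sierpinski_adj_cons_const {u v : V} (h : G.Adj u v) :
    (sierpinski G (t + 1)).Adj (Fin.cons u fun _ => v) (Fin.cons v fun _ => u) :=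
  ⟨0, fun j hj => absurd hj (Fin.not_lt_zero j), by simpa using h,
    Fin.cases (fun h => absurd h (lt_irrefl 0)) fun j _ => by simp⟩

theorem sierpinski_eq_of_adj_witness {x y z : Fin t → V} {i k : Fin t}
    (hy : (∀ j < i, x j = y j) ∧ G.Adj (x i) (y i) ∧ ∀ j, i < j → x j = y i ∧ y j = x i)
    (hz : (∀ j < k, x j = z j) ∧ G.Adj (x k) (z k) ∧ ∀ j, k < j → x j = z k ∧ z j = x k)
    (h : y i = z k) : y = z := by
  obtain ⟨hy₁, hy₂, hy₃⟩ := hy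
  obtain ⟨hz₁, hz₂, hz₃⟩ := hz
  rcases lt_trichotomy i k with hik | rfl | hki
  · exact absurd ((hy₃ k hik).1.trans h) hz₂.ne
  · funext j
    rcases lt_trichotomy j i with hj | rfl | hj
    · rw [← hy₁ j hj, hz₁ j hj]
    · exact h
    · rw [(hy₃ j hj).2, (hz₃ j hj).2]
  · exact absurd ((hz₃ i hki).1.trans h.symm) hy₂.ne

theorem sierpinski_degree_le [Fintype V] (x : Fin t → V)
    [Fintype ((sierpinski G t).neighborSet x)] :
    (sierpinski G t).degree x ≤ Fintype.card V := by
  rw [← SimpleGraph.card_neighborSet_eq_degree]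
  exact Fintype.card_le_of_injective (fun y => y.1 y.2.choose) fun y z h =>
    Subtype.ext (sierpinski_eq_of_adj_witness y.2.choose_spec z.2.choose_spec h)

end Sierpinski

section PrefixUnion

variable {α : Type*} {t : ℕ}

theorem cons_const_self (u : α) : (Fin.cons u fun _ => u : Fin (t + 1) → α) = fun _ => u :=
  Fin.cons_self_tail (fun _ => u)

variable [Fintype α] [DecidableEq α]

def prefixUnion (F : α → Finset (Fin t → α)) : Finset (Fin (t + 1) → α) :=
  {x | Fin.tail x ∈ F (x 0)}

@[simp]
theorem cons_mem_prefixUnion {F : α → Finset (Fin t → α)} {v : α} {y : Fin t → α} :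
    Fin.cons v y ∈ prefixUnion F ↔ y ∈ F v := by
  simp [prefixUnion]

theorem const_mem_prefixUnion {F : α → Finset (Fin t → α)} {u : α}
    (h : (fun _ => u) ∈ F u) : (fun _ => u) ∈ prefixUnion F := by
  rw [← cons_const_self]
  exact cons_mem_prefixUnion.2 h

theorem card_prefixUnion (F : α → Finset (Fin t → α)) :
    #(prefixUnion F) = ∑ v, #(F v) := by
  rw [← card_sigma]
  refine card_bij' (fun x _ => ⟨x 0, Fin.tail x⟩) (fun p _ => Fin.cons p.1 p.2) ?_ ?_ ?_ ?_
  · intro x hx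
    simpa [prefixUnion] using hx
  · rintro ⟨v, y⟩ h
    simpa using h
  · intro x _
    exact Fin.cons_self_tail x
  · rintro ⟨v, y⟩ _
    simp

variable {G : SimpleGraph α}

theorem dominated_prefixUnion_cons {F : α → Finset (Fin t → α)} {v : α} {y : Fin t → α}
    (h : Dominated (sierpinski G t) (F v) y) :
    Dominated (sierpinski G (t + 1)) (prefixUnion F) (Fin.cons v y) := by
  rcases h with hy | ⟨c, hc, hcy⟩
  · exact Or.inl (cons_mem_prefixUnion.2 hy)
  · exact Or.inr ⟨Fin.cons v c, cons_mem_prefixUnion.2 hc, sierpinski_adj_cons_cons v hcy⟩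

theorem dominated_prefixUnion_cons_const {F : α → Finset (Fin t → α)} {u v : α}
    (huv : G.Adj u v) (h : (fun _ => v) ∈ F u) :
    Dominated (sierpinski G (t + 1)) (prefixUnion F) (Fin.cons v fun _ => u) :=
  Or.inr ⟨Fin.cons u fun _ => v, cons_mem_prefixUnion.2 h, sierpinski_adj_cons_const huv⟩

theorem sum_ite_eq_add (u : α) {M : Type*} [AddCommMonoid M] (a b : M) :
    (∑ v, if v = u then a else b) + b = a + Fintype.card α • b := by
  rw [← add_sum_erase _ _ (mem_univ u), if_pos rfl, add_assoc,
    sum_congr rfl fun v hv => if_neg (ne_of_mem_erase hv), sum_const, ← succ_nsmul,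
    card_erase_of_mem (mem_univ u), card_univ,
    Nat.sub_add_cancel (Fintype.card_pos_iff.2 ⟨u⟩)]

end PrefixUnion

namespace SierpinskiComplete

variable (n : ℕ)

abbrev graph (t : ℕ) : SimpleGraph (Fin t → Fin n) :=
  sierpinski (SimpleGraph.completeGraph (Fin n)) t

/- For even `t`, `allExtremes` is a perfect code of `S(K_n, t)`; for odd `t`, so is each
`oneExtreme u`. -/
structure Codes (t : ℕ) where
  oneExtreme : Fin n → Finset (Fin t → Fin n)
  noExtremes : Finset (Fin t → Fin n)
  allExtremes : Finset (Fin t → Fin n)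
  butExtreme : Fin n → Finset (Fin t → Fin n)

-- The sizes of `oneExtreme` and `noExtremes` only matter at odd levels, so at `t = 0`
-- `univ` will do.
def codes : (t : ℕ) → Codes n t
  | 0 => ⟨fun _ => univ, univ, univ, fun _ => ∅⟩
  | t + 1 =>
    let c := codes t
    { oneExtreme := fun u => prefixUnion fun v => if v = u then c.allExtremes else c.butExtreme u
      noExtremes := prefixUnion c.butExtreme
      allExtremes := prefixUnion c.oneExtreme
      butExtreme := fun u => prefixUnion fun v => if v = u then c.noExtremes else c.oneExtreme u }

variable {n}

structure Codes.Dominating {t : ℕ} (c : Codes n t) : Prop where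
  oneExtreme : ∀ u x, Dominated (graph n t) (c.oneExtreme u) x
  const_mem_oneExtreme : ∀ u, (fun _ => u) ∈ c.oneExtreme u
  allExtremes : ∀ x, Dominated (graph n t) c.allExtremes x
  const_mem_allExtremes : ∀ u, (fun _ => u) ∈ c.allExtremes
  butExtreme : ∀ u x, x ≠ (fun _ => u) → Dominated (graph n t) (c.butExtreme u) x
  noExtremes : ∀ x, (∀ u, x ≠ fun _ => u) → Dominated (graph n t) c.noExtremes x

theorem codes_zero_dominating : (codes n 0).Dominating where
  oneExtreme _ _ := Or.inl (mem_univ _)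
  const_mem_oneExtreme _ := mem_univ _
  allExtremes _ := Or.inl (mem_univ _)
  const_mem_allExtremes _ := mem_univ _
  butExtreme _ x hx := absurd (Subsingleton.elim x _) hx
  noExtremes _ _ := Or.inl (mem_univ _)

theorem Codes.Dominating.succ {t : ℕ} (h : (codes n t).Dominating) :
    (codes n (t + 1)).Dominating where
  oneExtreme u := Fin.forall_fin_succ_pi.2 fun v y => by
    by_cases hvu : v = u
    · exact dominated_prefixUnion_cons (by simpa [hvu] using h.allExtremes y)
    by_cases hy : y = fun _ => u
    · rw [hy]
      exact dominated_prefixUnion_cons_const (Ne.symm hvu)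
        (by simpa using h.const_mem_allExtremes v)
    · exact dominated_prefixUnion_cons (by simpa [hvu] using h.butExtreme u y hy)
  const_mem_oneExtreme u := const_mem_prefixUnion (by simpa using h.const_mem_allExtremes u)
  allExtremes := Fin.forall_fin_succ_pi.2 fun v y =>
    dominated_prefixUnion_cons (h.oneExtreme v y)
  const_mem_allExtremes u := const_mem_prefixUnion (h.const_mem_oneExtreme u)
  butExtreme u := Fin.forall_fin_succ_pi.2 fun v y hvy => by
    by_cases hvu : v = u
    · subst hvu
      by_cases hy : ∃ w, y = fun _ => w
      · obtain ⟨w, rfl⟩ := hy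
        have hwv : w ≠ v := by
          rintro rfl
          exact hvy (cons_const_self w)
        exact dominated_prefixUnion_cons_const hwv (by simpa [hwv] using h.const_mem_oneExtreme v)
      · exact dominated_prefixUnion_cons (by simpa using h.noExtremes y fun w hw => hy ⟨w, hw⟩)
    · exact dominated_prefixUnion_cons (by simpa [hvu] using h.oneExtreme u y)
  noExtremes := Fin.forall_fin_succ_pi.2 fun v y hvy =>
    dominated_prefixUnion_cons (h.butExtreme v y fun hy => hvy v (by rw [hy, cons_const_self]))

theorem codes_dominating (t : ℕ) : (codes n t).Dominating := by
  induction t with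
  | zero => exact codes_zero_dominating
  | succ t ih => exact ih.succ

theorem card_oneExtreme_succ (t : ℕ) (u : Fin n) :
    #((codes n (t + 1)).oneExtreme u) + #((codes n t).butExtreme u) =
      #(codes n t).allExtremes + n * #((codes n t).butExtreme u) := by
  simpa [codes, card_prefixUnion, apply_ite card] using sum_ite_eq_add u (M := ℕ) _ _

theorem card_butExtreme_succ (t : ℕ) (u : Fin n) :
    #((codes n (t + 1)).butExtreme u) + #((codes n t).oneExtreme u) =
      #(codes n t).noExtremes + n * #((codes n t).oneExtreme u) := by
  simpa [codes, card_prefixUnion, apply_ite card] using sum_ite_eq_add u (M := ℕ) _ _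

theorem card_noExtremes_succ (t : ℕ) :
    #(codes n (t + 1)).noExtremes = ∑ v, #((codes n t).butExtreme v) :=
  card_prefixUnion _

theorem card_allExtremes_succ (t : ℕ) :
    #(codes n (t + 1)).allExtremes = ∑ v, #((codes n t).oneExtreme v) :=
  card_prefixUnion _

def Codes.EvenCards {t : ℕ} (c : Codes n t) : Prop :=
  ((n : ℤ) + 1) * #c.allExtremes = n ^ t + n ∧
    ∀ u, ((n : ℤ) + 1) * #(c.butExtreme u) = n ^ t - 1

def Codes.OddCards {t : ℕ} (c : Codes n t) : Prop :=
  (∀ u, ((n : ℤ) + 1) * #(c.oneExtreme u) = n ^ t + 1) ∧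
    ((n : ℤ) + 1) * #c.noExtremes = n ^ t - n

theorem oddCards_succ {t : ℕ} (h : (codes n t).EvenCards) : (codes n (t + 1)).OddCards := by
  obtain ⟨hC, hD⟩ := h
  refine ⟨fun u => ?_, ?_⟩
  · have E := card_oneExtreme_succ t u
    zify at E
    linear_combination (↑n + 1) * E + hC + (↑n - 1) * hD u
  · rw [card_noExtremes_succ]
    push_cast
    rw [mul_sum, sum_congr rfl fun v _ => hD v]
    simp only [sum_const, card_univ, Fintype.card_fin, nsmul_eq_mul]
    ring

theorem evenCards_succ {t : ℕ} (h : (codes n t).OddCards) : (codes n (t + 1)).EvenCards := by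
  obtain ⟨hA, hB⟩ := h
  refine ⟨?_, fun u => ?_⟩
  · rw [card_allExtremes_succ]
    push_cast
    rw [mul_sum, sum_congr rfl fun v _ => hA v]
    simp only [sum_const, card_univ, Fintype.card_fin, nsmul_eq_mul]
    ring
  · have E := card_butExtreme_succ t u
    zify at E
    linear_combination (↑n + 1) * E + hB + (↑n - 1) * hA u

theorem codes_cards (t : ℕ) :
    (Even t → (codes n t).EvenCards) ∧ (Odd t → (codes n t).OddCards) := by
  induction t with
  | zero => exact ⟨fun _ => ⟨by simp [codes, add_comm], fun _ => by simp [codes]⟩, by simp⟩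
  | succ t ih =>
    refine ⟨fun ht => evenCards_succ (ih.2 ?_), fun ht => oddCards_succ (ih.1 ?_)⟩
    · exact Nat.even_add_one.1 ht |> Nat.not_even_iff_odd.1
    · exact Nat.not_odd_iff_even.1 (Nat.odd_add_one.1 ht)

end SierpinskiComplete

theorem stmt16_general (n t : ℕ) (hn : 2 ≤ n) :
    (Even t → (n + 1) * gamma (sierpinski (SimpleGraph.completeGraph (Fin n)) t) = n ^ t + n) ∧
    (Odd t → (n + 1) * gamma (sierpinski (SimpleGraph.completeGraph (Fin n)) t) = n ^ t + 1) := by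
  classical
  have hlow : n ^ t ≤ (n + 1) * gamma (sierpinski (SimpleGraph.completeGraph (Fin n)) t) := by
    simpa using card_le_mul_gamma (SierpinskiComplete.graph n t) fun x => by
      simpa using sierpinski_degree_le x
  have hdom := SierpinskiComplete.codes_dominating (n := n) t
  have hcards := SierpinskiComplete.codes_cards (n := n) t
  refine ⟨fun ht => ?_, fun ht => ?_⟩
  · exact mul_gamma_eq_of_isDomSet _ hdom.allExtremes le_rfl hlow
      (by exact_mod_cast (hcards.1 ht).1)
  · exact mul_gamma_eq_of_isDomSet _ (hdom.oneExtreme ⟨0, by omega⟩) (by omega) hlow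
      (by exact_mod_cast (hcards.2 ht).1 _)

theorem stmt16 (n t : ℕ) (hn : 2 ≤ n) (ht : 1 ≤ t) :
    (Even t → (n + 1) * gamma (sierpinski (SimpleGraph.completeGraph (Fin n)) t) = n ^ t + n) ∧
    (Odd t → (n + 1) * gamma (sierpinski (SimpleGraph.completeGraph (Fin n)) t) = n ^ t + 1) :=
  stmt16_general n t hn
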